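/- Let s ≥ 3 and N ≥ 1. Suppose φ : Σ_s → ℝ^N is bounded by some R > 0 and exponentially locally determined. Let ξ^(1), ξ^(2), …, ξ^(k) ∈ Σ_s be periodic sequences with rotation vectors ρ_i = ρ_φ(ξ^(i)), i = 1,…,k. Then for every v in the convex hull conv(ρ_1,…,ρ_k) (i.e. v = Σ_{i=1}^k t_i ρ_i for some t_i ≥ 0 with Σ_{i=1}^k t_i = 1) and every ε > 0, there exists a periodic sequence η ∈ Σ_s such that ‖ρ_φ(η) − v‖ < ε. -/

import Mathlib

open Filter Topology

/-- The symbol space `Σ_s`: bi-infinite admissible sequences over an alphabet with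
`s` symbols (represented by `Fin s`), i.e. `ξ_i ≠ ξ_{i+1}` for all `i ∈ ℤ`. -/
def SymbSpace (s : ℕ) : Type := {ξ : ℤ → Fin s // ∀ i : ℤ, ξ i ≠ ξ (i + 1)}

/-- The (left) shift map `σ : Σ_s → Σ_s`, `(σξ)_i = ξ_{i+1}`. -/
def shift {s : ℕ} (ξ : SymbSpace s) : SymbSpace s :=
  ⟨fun i => ξ.1 (i + 1), fun i => ξ.2 (i + 1)⟩

/-- Birkhoff average `A_n(ξ) = (1/n) ∑_{i=0}^{n-1} φ(σ^i ξ)`. -/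
noncomputable def birk {s N : ℕ} (φ : SymbSpace s → EuclideanSpace ℝ (Fin N))
    (n : ℕ) (ξ : SymbSpace s) : EuclideanSpace ℝ (Fin N) :=
  (n : ℝ)⁻¹ • ∑ i ∈ Finset.range n, φ (shift^[i] ξ)

/-- `ρ` is the rotation vector `ρ_φ(ξ)`, i.e. the limit of the Birkhoff averages exists
and equals `ρ`. -/
def HasRotVec {s N : ℕ} (φ : SymbSpace s → EuclideanSpace ℝ (Fin N))
    (ξ : SymbSpace s) (ρ : EuclideanSpace ℝ (Fin N)) : Prop :=
  Tendsto (fun n => birk φ n ξ) atTop (nhds ρ)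

/-- `φ` is exponentially locally determined: there are `C > 0` and `δ ∈ (0,1)` such that
whenever `ξ_j = ξ'_j` for all `-m ≤ j ≤ m'`, one has `‖φ(ξ) - φ(ξ')‖ ≤ C(δ^m + δ^{m'})`. -/
def ExpLocDet {s N : ℕ} (φ : SymbSpace s → EuclideanSpace ℝ (Fin N)) : Prop :=
  ∃ C : ℝ, 0 < C ∧ ∃ δ : ℝ, 0 < δ ∧ δ < 1 ∧
    ∀ (m m' : ℕ) (ξ ξ' : SymbSpace s),
      (∀ j : ℤ, -(m : ℤ) ≤ j → j ≤ (m' : ℤ) → ξ.1 j = ξ'.1 j) →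
      ‖φ ξ - φ ξ'‖ ≤ C * (δ ^ m + δ ^ m')

/-!
The closure of the set of rotation vectors of periodic sequences is convex, hence contains the
convex hull of the `ρ i`. For convexity, take periodic orbits with rotation vectors `x` and `y`,
follow the first for a stretch of length `L ≈ θ q` and the second for `L' ≈ (1 - θ) q`, join the
two stretches by connecting symbols (available since `s ≥ 3`) and repeat with period
`q = L + L' + 2`. Since `φ` is exponentially locally determined, the Birkhoff sums along the two
stretches differ from those of the original orbits by a constant independent of `L` and `L'`, so
the rotation vector of the glued orbit is within `O(1 / q)` of `θ • x + (1 - θ) • y`.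
-/

open Function

section PeriodicBirkhoff

variable {α E : Type*} {f : α → α} {x : α} {p : ℕ}

theorem Function.IsPeriodicPt.birkhoffSum_mul [AddCommMonoid E] (h : IsPeriodicPt f p x)
    (g : α → E) (m : ℕ) : birkhoffSum f g (m * p) x = m • birkhoffSum f g p x := by
  induction m with
  | zero => simp
  | succ m ih => rw [add_one_mul, birkhoffSum_add, (h.const_mul m).eq, ih, succ_nsmul]

theorem Function.IsPeriodicPt.birkhoffSum_eq_smul_birkhoffAverage (R : Type*)
    [DivisionSemiring R] [CharZero R] [AddCommMonoid E] [Module R E] (h : IsPeriodicPt f p x)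
    (hp : p ≠ 0) (g : α → E) {n : ℕ} (hn : p ∣ n) :
    birkhoffSum f g n x = (n : R) • birkhoffAverage R f g p x := by
  obtain ⟨m, rfl⟩ := hn
  rw [mul_comm, h.birkhoffSum_mul, birkhoffAverage, smul_smul, Nat.cast_mul, mul_assoc,
    mul_inv_cancel₀ (Nat.cast_ne_zero.2 hp), mul_one, Nat.cast_smul_eq_nsmul]

theorem norm_birkhoffAverage_le [NormedAddCommGroup E] [NormedSpace ℝ E] {g : α → E} {R : ℝ}
    (hg : ∀ y, ‖g y‖ ≤ R) (n : ℕ) (x : α) : ‖birkhoffAverage ℝ f g n x‖ ≤ R := by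
  rcases Nat.eq_zero_or_pos n with rfl | hn
  · simpa using (norm_nonneg _).trans (hg x)
  have hsum : ‖birkhoffSum f g n x‖ ≤ n * R := by
    simpa [birkhoffSum] using norm_sum_le_of_le (Finset.range n) fun k _ => hg (f^[k] x)
  rw [birkhoffAverage, norm_smul, norm_inv, Real.norm_natCast, inv_mul_le_iff₀ (by positivity)]
  exact hsum

/-- `birkhoffSum f g n x - n • birkhoffAverage ℝ f g p x` depends only on `n % p`, hence is
bounded. -/
theorem Function.IsPeriodicPt.tendsto_birkhoffAverage [NormedAddCommGroup E] [NormedSpace ℝ E]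
    (h : IsPeriodicPt f p x) (hp : p ≠ 0) (g : α → E) :
    Tendsto (birkhoffAverage ℝ f g · x) atTop (𝓝 (birkhoffAverage ℝ f g p x)) := by
  set c := birkhoffAverage ℝ f g p x
  set D : ℕ → E := fun n => birkhoffSum f g n x - (n : ℝ) • c
  have hD : ∀ n, D n = D (n % p) := by
    intro n
    conv_lhs => rw [← Nat.div_add_mod' n p]
    simp only [D, birkhoffSum_add, (h.const_mul _).eq,
      h.birkhoffSum_eq_smul_birkhoffAverage ℝ hp g (dvd_mul_left p (n / p)), Nat.cast_add,
      add_smul]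
    abel
  set M := ∑ r ∈ Finset.range p, ‖D r‖
  have hDM : ∀ n, ‖D n‖ ≤ M := fun n => hD n ▸ Finset.single_le_sum
    (fun r _ => norm_nonneg (D r)) (Finset.mem_range.2 (Nat.mod_lt n (Nat.pos_of_ne_zero hp)))
  rw [tendsto_iff_norm_sub_tendsto_zero]
  refine squeeze_zero' (Eventually.of_forall fun n => norm_nonneg _) ?_
    (tendsto_const_div_atTop_nhds_zero_nat M)
  filter_upwards [eventually_ne_atTop 0] with n hn
  have hn' : (n : ℝ) ≠ 0 := Nat.cast_ne_zero.2 hn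
  have hDn : birkhoffAverage ℝ f g n x - c = (n : ℝ)⁻¹ • D n := by
    rw [smul_sub, smul_smul, inv_mul_cancel₀ hn', one_smul, birkhoffAverage]
  rw [hDn, norm_smul, norm_inv, Real.norm_natCast, ← div_eq_inv_mul]
  exact div_le_div_of_nonneg_right (hDM n) (Nat.cast_nonneg n)

end PeriodicBirkhoff

theorem norm_inv_smul_sub_convexCombo_le {E : Type*} [NormedAddCommGroup E] [NormedSpace ℝ E]
    {S x y : E} {L L' θ K R : ℝ} (hS : ‖S - (L • x + L' • y)‖ ≤ K) (hx : ‖x‖ ≤ R)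
    (hy : ‖y‖ ≤ R) (hq : 0 < L + L' + 2) :
    ‖(L + L' + 2)⁻¹ • S - (θ • x + (1 - θ) • y)‖ ≤
      (K + 2 * R * |L - θ * (L + L' + 2)| + 2 * R) / (L + L' + 2) := by
  set q := L + L' + 2
  have hid : q • (q⁻¹ • S - (θ • x + (1 - θ) • y)) =
      (S - (L • x + L' • y)) + (L - θ * q) • (x - y) - (2 : ℝ) • y := by
    rw [smul_sub, smul_inv_smul₀ hq.ne']
    simp only [q]
    module
  have hnorm : ‖q • (q⁻¹ • S - (θ • x + (1 - θ) • y))‖ =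
      ‖q⁻¹ • S - (θ • x + (1 - θ) • y)‖ * q := by
    rw [norm_smul, Real.norm_of_nonneg hq.le, mul_comm]
  rw [le_div_iff₀ hq, ← hnorm, hid]
  have hxy : ‖x - y‖ ≤ 2 * R := (norm_sub_le x y).trans (by linarith)
  calc _ ≤ ‖S - (L • x + L' • y)‖ + ‖(L - θ * q) • (x - y)‖ + ‖(2 : ℝ) • y‖ :=
        (norm_sub_le _ _).trans (add_le_add_left (norm_add_le _ _) _)
    _ ≤ K + |L - θ * q| * (2 * R) + 2 * R := by
        rw [norm_smul, norm_smul, Real.norm_eq_abs, Real.norm_two]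
        gcongr
    _ = K + 2 * R * |L - θ * q| + 2 * R := by ring

theorem exists_pos_add_eq_abs_sub_mul_le {θ : ℝ} (hθ0 : 0 ≤ θ) (hθ1 : θ ≤ 1) (n : ℕ) :
    ∃ A B : ℕ, 0 < A ∧ 0 < B ∧ A + B = n + 2 ∧ |(A : ℝ) - θ * (n + 2)| ≤ 2 := by
  have hθn : θ * n ≤ n := mul_le_of_le_one_left n.cast_nonneg hθ1
  have hfl : ⌊θ * n⌋₊ ≤ n := Nat.floor_le_of_le hθn
  refine ⟨⌊θ * n⌋₊ + 1, n + 1 - ⌊θ * n⌋₊, by omega, by omega, by omega, ?_⟩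
  have h1 := Nat.floor_le (mul_nonneg hθ0 n.cast_nonneg)
  have h2 := Nat.lt_floor_add_one (θ * n)
  rw [abs_le]
  push_cast
  constructor <;> linarith

theorem convex_closure_of_forall_convexCombo_mem_closure {E : Type*} [AddCommGroup E]
    [Module ℝ E] [TopologicalSpace E] [IsTopologicalAddGroup E] [ContinuousSMul ℝ E] {S : Set E}
    (h : ∀ x ∈ S, ∀ y ∈ S, ∀ θ : ℝ, 0 ≤ θ → θ ≤ 1 → θ • x + (1 - θ) • y ∈ closure S) :
    Convex ℝ (closure S) := by
  intro x hx y hy a b ha _ hab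
  obtain rfl : b = 1 - a := by linarith
  rw [← closure_closure (s := S)]
  exact map_mem_closure₂ (f := fun x y => a • x + (1 - a) • y) (by fun_prop) hx hy
    fun x hx y hy => h x hx y hy a ha (by linarith)

theorem Fin.exists_ne_and_ne {s : ℕ} (hs : 3 ≤ s) (a b : Fin s) : ∃ c, c ≠ a ∧ c ≠ b := by
  obtain ⟨c, -, hc⟩ := Finset.exists_mem_notMem_of_card_lt_card (s := {a, b})
    (t := Finset.univ) ((Finset.card_le_two).trans_lt (by simp; omega))
  exact ⟨c, by simp_all, by simp_all⟩

section Words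

variable {α : Type*}

def AdmissibleUpTo (w : ℤ → α) (n : ℤ) : Prop :=
  ∀ j, 0 ≤ j → j + 1 < n → w j ≠ w (j + 1)

def wordAppend (L : ℤ) (u v : ℤ → α) : ℤ → α :=
  fun j => if j < L then u j else v (j - L)

theorem wordAppend_of_lt {L j : ℤ} (u v : ℤ → α) (h : j < L) : wordAppend L u v j = u j :=
  if_pos h

theorem wordAppend_add {L j : ℤ} (u v : ℤ → α) (h : 0 ≤ j) : wordAppend L u v (L + j) = v j := by
  rw [wordAppend, if_neg (by omega), add_sub_cancel_left]

theorem admissibleUpTo_one (w : ℤ → α) : AdmissibleUpTo w 1 :=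
  fun _ _ _ => by omega

theorem AdmissibleUpTo.append {u v : ℤ → α} {L M : ℤ} (hu : AdmissibleUpTo u L)
    (hv : AdmissibleUpTo v M) (huv : u (L - 1) ≠ v 0) :
    AdmissibleUpTo (wordAppend L u v) (L + M) := by
  intro j hj hjM
  rcases lt_trichotomy (j + 1) L with h | h | h
  · rw [wordAppend_of_lt u v h, wordAppend_of_lt u v (by omega)]
    exact hu j hj h
  · obtain rfl : j = L - 1 := by omega
    simp only [wordAppend, if_pos (sub_one_lt L), sub_add_cancel, lt_irrefl, if_false, sub_self]
    exact huv
  · obtain ⟨i, hi, rfl⟩ : ∃ i, 0 ≤ i ∧ j = L + i := ⟨j - L, by omega, by ring⟩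
    rw [wordAppend_add u v hi, add_assoc, wordAppend_add u v (by omega)]
    exact hv i hi (by omega)

end Words

theorem shift_iterate_apply {s : ℕ} (ξ : SymbSpace s) (m : ℕ) (j : ℤ) :
    (shift^[m] ξ).1 j = ξ.1 (j + m) := by
  induction m generalizing j with
  | zero => simp
  | succ m ih =>
    rw [iterate_succ_apply', shift, ih]
    push_cast
    ring_nf

theorem SymbSpace.admissibleUpTo {s : ℕ} (ξ : SymbSpace s) (n : ℤ) : AdmissibleUpTo ξ.1 n :=
  fun j _ _ => ξ.2 j

theorem exists_isPeriodicPt_of_word {s q : ℕ} (hq : 0 < q) {w : ℤ → Fin s}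
    (hw : AdmissibleUpTo w (q + 1)) (hwq : w q = w 0) :
    ∃ η : SymbSpace s, IsPeriodicPt shift q η ∧ ∀ j : ℤ, 0 ≤ j → j < q → η.1 j = w j := by
  have hqZ : (0 : ℤ) < q := by exact_mod_cast hq
  have hnext : ∀ j : ℤ, w ((j + 1) % q) = w (j % q + 1) := by
    intro j
    have := Int.emod_nonneg j hqZ.ne'
    rw [← Int.emod_add_emod]
    rcases (Int.add_one_le_of_lt (Int.emod_lt_of_pos j hqZ)).lt_or_eq with h | h
    · rw [Int.emod_eq_of_lt (by omega) (by omega)]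
    · rw [show j % q + 1 = q by omega, Int.emod_self, hwq]
  refine ⟨⟨fun j => w (j % q), fun j => ?_⟩, ?_, fun j hj hjq => ?_⟩
  · change w (j % q) ≠ w ((j + 1) % q)
    rw [hnext]
    have := Int.emod_lt_of_pos j hqZ
    exact hw (j % q) (Int.emod_nonneg j hqZ.ne') (by omega)
  · refine Subtype.ext (funext fun j => ?_)
    exact (shift_iterate_apply _ _ _).trans (congrArg w Int.emod_eq_add_self_emod.symm)
  · exact congrArg w (Int.emod_eq_of_lt hj hjq)

/-- `η` repeats the word `ξ 0 ⋯ ξ (L - 1) c ξ' 0 ⋯ ξ' (L' - 1) d` with connecting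
symbols `c, d`. -/
theorem exists_isPeriodicPt_glue {s : ℕ} (hs : 3 ≤ s) (ξ ξ' : SymbSpace s) {L L' : ℕ}
    (hL : 0 < L) (hL' : 0 < L') :
    ∃ η : SymbSpace s, IsPeriodicPt shift (L + L' + 2) η ∧
      (∀ j : ℤ, 0 ≤ j → j < L → η.1 j = ξ.1 j) ∧
      (∀ j : ℤ, 0 ≤ j → j < L' → (shift^[L + 1] η).1 j = ξ'.1 j) := by
  obtain ⟨c, hc, hc'⟩ := Fin.exists_ne_and_ne hs (ξ.1 (L - 1)) (ξ'.1 0)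
  obtain ⟨d, hd, hd'⟩ := Fin.exists_ne_and_ne hs (ξ'.1 (L' - 1)) (ξ.1 0)
  set tail := wordAppend L' ξ'.1 (wordAppend 1 (fun _ => d) ξ.1)
  set w := wordAppend L ξ.1 (wordAppend 1 (fun _ => c) tail)
  have htail0 : tail 0 = ξ'.1 0 := wordAppend_of_lt _ _ (by omega)
  have hw : AdmissibleUpTo w (L + (1 + (L' + (1 + 1)))) :=
    (ξ.admissibleUpTo L).append ((admissibleUpTo_one _).append
      ((ξ'.admissibleUpTo L').append ((admissibleUpTo_one _).append
        (ξ.admissibleUpTo 1) hd') (by simpa [wordAppend] using hd.symm))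
        (by simpa [htail0] using hc'))
      (by simpa [wordAppend] using hc.symm)
  have hwq : w (L + L' + 2 : ℕ) = w 0 := by
    simp only [w, tail, wordAppend]
    split_ifs <;> first | omega | exact congrArg _ (by omega)
  obtain ⟨η, hη, hηw⟩ := exists_isPeriodicPt_of_word (by omega) (w := w)
    (by convert hw using 1; push_cast; ring) hwq
  refine ⟨η, hη, fun j hj hjL => ?_, fun j hj hjL' => ?_⟩
  · rw [hηw j hj (by omega)]
    exact wordAppend_of_lt _ _ hjL
  · rw [shift_iterate_apply, hηw _ (by omega) (by omega)]
    simp only [w, tail, wordAppend]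
    split_ifs <;> first | omega | exact congrArg _ (by omega)

section RotationVectors

variable {s N : ℕ} {φ : SymbSpace s → EuclideanSpace ℝ (Fin N)} {R : ℝ}

theorem birk_eq_birkhoffAverage (φ : SymbSpace s → EuclideanSpace ℝ (Fin N)) :
    birk φ = birkhoffAverage ℝ shift φ :=
  rfl

theorem hasRotVec_birk_of_isPeriodicPt {η : SymbSpace s} {q : ℕ} (hη : IsPeriodicPt shift q η)
    (hq : 0 < q) : HasRotVec φ η (birk φ q η) :=
  hη.tendsto_birkhoffAverage hq.ne' φ

theorem HasRotVec.eq_birk_of_isPeriodicPt {ξ : SymbSpace s} {p : ℕ}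
    {ρ : EuclideanSpace ℝ (Fin N)} (hρ : HasRotVec φ ξ ρ) (hξ : IsPeriodicPt shift p ξ)
    (hp : 0 < p) : ρ = birk φ p ξ :=
  tendsto_nhds_unique hρ (hasRotVec_birk_of_isPeriodicPt hξ hp)

theorem HasRotVec.norm_le {ξ : SymbSpace s} {ρ : EuclideanSpace ℝ (Fin N)}
    (hρ : HasRotVec φ ξ ρ) (hbdd : ∀ ξ, ‖φ ξ‖ ≤ R) : ‖ρ‖ ≤ R :=
  le_of_tendsto' hρ.norm fun n => norm_birkhoffAverage_le hbdd n ξ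

/-- The `i`-th terms differ by at most `C (δ ^ i + δ ^ (L - 1 - i))`, a summable bound. -/
theorem ExpLocDet.exists_norm_birkhoffSum_sub_le (hloc : ExpLocDet φ) :
    ∃ K, ∀ (L : ℕ) (ξ ξ' : SymbSpace s), (∀ j : ℤ, 0 ≤ j → j < L → ξ.1 j = ξ'.1 j) →
      ‖birkhoffSum shift φ L ξ - birkhoffSum shift φ L ξ'‖ ≤ K := by
  obtain ⟨C, hC, δ, hδ0, hδ1, hφ⟩ := hloc
  refine ⟨2 * C * (1 - δ)⁻¹, fun L ξ ξ' hagree => ?_⟩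
  have hterm : ∀ i ∈ Finset.range L,
      dist (φ (shift^[i] ξ)) (φ (shift^[i] ξ')) ≤ C * (δ ^ i + δ ^ (L - 1 - i)) := by
    intro i hi
    rw [Finset.mem_range] at hi
    rw [dist_eq_norm]
    refine hφ i (L - 1 - i) _ _ fun j hj hj' => ?_
    rw [shift_iterate_apply, shift_iterate_apply]
    exact hagree _ (by omega) (by omega)
  have hgeom : ∑ i ∈ Finset.range L, δ ^ i ≤ (1 - δ)⁻¹ := by
    simpa [← Finset.range_eq_Ico, one_div] using
      geom_sum_Ico_le_of_lt_one hδ0.le hδ1 (m := 0) (n := L)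
  rw [← dist_eq_norm]
  calc dist (birkhoffSum shift φ L ξ) (birkhoffSum shift φ L ξ')
      ≤ ∑ i ∈ Finset.range L, C * (δ ^ i + δ ^ (L - 1 - i)) :=
        (dist_birkhoffSum_birkhoffSum_le _ _ _ _ _).trans (Finset.sum_le_sum hterm)
    _ = 2 * C * ∑ i ∈ Finset.range L, δ ^ i := by
        rw [← Finset.mul_sum, Finset.sum_add_distrib, Finset.sum_range_reflect (δ ^ ·) L]
        ring
    _ ≤ 2 * C * (1 - δ)⁻¹ := by gcongr

theorem exists_isPeriodicPt_norm_birkhoffSum_glue_sub_le (hs : 3 ≤ s) (hbdd : ∀ ξ, ‖φ ξ‖ ≤ R)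
    (hloc : ExpLocDet φ) :
    ∃ K, ∀ (ξ ξ' : SymbSpace s) {L L' : ℕ}, 0 < L → 0 < L' →
      ∃ η, IsPeriodicPt shift (L + L' + 2) η ∧
        ‖birkhoffSum shift φ (L + L' + 2) η -
          (birkhoffSum shift φ L ξ + birkhoffSum shift φ L' ξ')‖ ≤ K := by
  obtain ⟨K, hK⟩ := hloc.exists_norm_birkhoffSum_sub_le
  refine ⟨K + K + R + R, fun ξ ξ' L L' hL hL' => ?_⟩
  obtain ⟨η, hη, hagree, hagree'⟩ := exists_isPeriodicPt_glue hs ξ ξ' hL hL'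
  refine ⟨η, hη, ?_⟩
  have hsplit : birkhoffSum shift φ (L + L' + 2) η - (birkhoffSum shift φ L ξ +
      birkhoffSum shift φ L' ξ') = (birkhoffSum shift φ L η - birkhoffSum shift φ L ξ) +
      (birkhoffSum shift φ L' (shift^[L + 1] η) - birkhoffSum shift φ L' ξ') +
      φ (shift^[L] η) + φ (shift^[L'] (shift^[L + 1] η)) := by
    rw [show L + L' + 2 = (L + 1) + (L' + 1) by ring, birkhoffSum_add, birkhoffSum_succ,
      birkhoffSum_succ]
    abel
  rw [hsplit]
  refine norm_add₄_le.trans (add_le_add (add_le_add (add_le_add ?_ ?_) (hbdd _)) (hbdd _))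
  · exact hK L η ξ hagree
  · exact hK L' _ ξ' hagree'

def periodicRotationSet (φ : SymbSpace s → EuclideanSpace ℝ (Fin N)) :
    Set (EuclideanSpace ℝ (Fin N)) :=
  {ρ | ∃ η q, 0 < q ∧ IsPeriodicPt shift q η ∧ HasRotVec φ η ρ}

theorem convexCombo_mem_closure_periodicRotationSet (hs : 3 ≤ s) (hbdd : ∀ ξ, ‖φ ξ‖ ≤ R)
    (hloc : ExpLocDet φ) {x y : EuclideanSpace ℝ (Fin N)} (hx : x ∈ periodicRotationSet φ)
    (hy : y ∈ periodicRotationSet φ) {θ : ℝ} (hθ0 : 0 ≤ θ) (hθ1 : θ ≤ 1) :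
    θ • x + (1 - θ) • y ∈ closure (periodicRotationSet φ) := by
  obtain ⟨ξ, p, hp, hξ, hx⟩ := hx
  obtain ⟨ξ', p', hp', hξ', hy⟩ := hy
  obtain ⟨K, hK⟩ := exists_isPeriodicPt_norm_birkhoffSum_glue_sub_le hs hbdd hloc
  have hR : 0 ≤ R := (norm_nonneg _).trans (hbdd ξ)
  set P := p * p'
  set M := K + 2 * R * (2 * P + 2) + 2 * R
  rw [Metric.mem_closure_iff]
  intro ε hε
  obtain ⟨n, hn⟩ := exists_nat_gt (M / ε)
  obtain ⟨A, B, hA, hB, hAB, hθA⟩ := exists_pos_add_eq_abs_sub_mul_le hθ0 hθ1 n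
  obtain ⟨η, hη, hηS⟩ := hK ξ ξ' (L := A * P) (L' := B * P) (by positivity) (by positivity)
  set q := A * P + B * P + 2
  refine ⟨birk φ q η, ⟨η, q, by omega, hη, hasRotVec_birk_of_isPeriodicPt hη (by omega)⟩, ?_⟩
  have hpL : p ∣ A * P := dvd_mul_of_dvd_right (dvd_mul_right p p') A
  have hpL' : p' ∣ B * P := dvd_mul_of_dvd_right (dvd_mul_left p' p) B
  rw [hξ.birkhoffSum_eq_smul_birkhoffAverage ℝ hp.ne' φ hpL,
    hξ'.birkhoffSum_eq_smul_birkhoffAverage ℝ hp'.ne' φ hpL',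
    ← birk_eq_birkhoffAverage, ← hx.eq_birk_of_isPeriodicPt hξ hp,
    ← hy.eq_birk_of_isPeriodicPt hξ' hp'] at hηS
  have hq : (q : ℝ) = (A * P : ℕ) + (B * P : ℕ) + 2 := by push_cast [q]; ring
  have hbirk : birk φ q η = (q : ℝ)⁻¹ • birkhoffSum shift φ q η := rfl
  have hAB' : (A : ℝ) + B = n + 2 := by exact_mod_cast hAB
  have hL : |((A * P : ℕ) : ℝ) - θ * q| ≤ 2 * P + 2 := by
    rw [show ((A * P : ℕ) : ℝ) - θ * q = P * (A - θ * (n + 2)) - 2 * θ by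
      rw [hq, ← hAB']; push_cast; ring]
    refine (abs_sub _ _).trans ?_
    rw [abs_mul, Nat.abs_cast, abs_of_nonneg (by positivity : 0 ≤ 2 * θ)]
    nlinarith [(Nat.cast_nonneg P : (0 : ℝ) ≤ P)]
  have hnq : (n : ℝ) < q := by
    have hP : (1 : ℝ) ≤ P := by exact_mod_cast Nat.mul_pos hp hp'
    rw [hq]; push_cast; nlinarith
  have key := norm_inv_smul_sub_convexCombo_le (θ := θ) hηS (hx.norm_le hbdd) (hy.norm_le hbdd)
    (by positivity)
  rw [← hq, ← hbirk] at key
  rw [dist_comm, dist_eq_norm]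
  calc _ ≤ _ := key
    _ ≤ M / q := by simp only [M]; gcongr
    _ < ε := by
        rw [div_lt_iff₀ hε] at hn
        rw [div_lt_iff₀ (by positivity)]
        nlinarith

end RotationVectors

theorem convex_combination_approx_by_periodic_general (s N : ℕ) (hs : 3 ≤ s)
    (φ : SymbSpace s → EuclideanSpace ℝ (Fin N))
    (R : ℝ) (hbdd : ∀ ξ, ‖φ ξ‖ ≤ R) (hloc : ExpLocDet φ)
    (k : ℕ) (ξ : Fin k → SymbSpace s) (p : Fin k → ℕ)
    (hp : ∀ i, 0 < p i) (hper : ∀ i, shift^[p i] (ξ i) = ξ i)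
    (ρ : Fin k → EuclideanSpace ℝ (Fin N)) (hρ : ∀ i, HasRotVec φ (ξ i) (ρ i))
    (t : Fin k → ℝ) (ht0 : ∀ i, 0 ≤ t i) (ht1 : ∑ i, t i = 1)
    (v : EuclideanSpace ℝ (Fin N)) (hv : v = ∑ i, t i • ρ i)
    (ε : ℝ) (hε : 0 < ε) :
    ∃ (η : SymbSpace s) (q : ℕ), 0 < q ∧ shift^[q] η = η ∧
      ∃ ρη : EuclideanSpace ℝ (Fin N), HasRotVec φ η ρη ∧ ‖ρη - v‖ < ε := by
  have hconv : Convex ℝ (closure (periodicRotationSet φ)) :=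
    convex_closure_of_forall_convexCombo_mem_closure fun x hx y hy θ hθ0 hθ1 =>
      convexCombo_mem_closure_periodicRotationSet hs hbdd hloc hx hy hθ0 hθ1
  have hvmem : v ∈ closure (periodicRotationSet φ) := hv ▸ hconv.sum_mem (fun i _ => ht0 i) ht1
    fun i _ => subset_closure ⟨ξ i, p i, hp i, hper i, hρ i⟩
  obtain ⟨ρη, ⟨η, q, hq, hη, hρη⟩, hdist⟩ := Metric.mem_closure_iff.1 hvmem ε hε
  exact ⟨η, q, hq, hη, ρη, hρη, by rwa [dist_comm, dist_eq_norm] at hdist⟩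

/-- any convex combination `v` of rotation vectors of periodic sequences
can be approximated within any `ε > 0` by the rotation vector of a single periodic
sequence `η`. -/
theorem convex_combination_approx_by_periodic (s N : ℕ) (hs : 3 ≤ s) (hN : 1 ≤ N)
    (φ : SymbSpace s → EuclideanSpace ℝ (Fin N))
    (R : ℝ) (hR : 0 < R) (hbdd : ∀ ξ, ‖φ ξ‖ ≤ R) (hloc : ExpLocDet φ)
    (k : ℕ) (hk : 0 < k) (ξ : Fin k → SymbSpace s) (p : Fin k → ℕ)
    (hp : ∀ i, 0 < p i) (hper : ∀ i, shift^[p i] (ξ i) = ξ i)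
    (ρ : Fin k → EuclideanSpace ℝ (Fin N)) (hρ : ∀ i, HasRotVec φ (ξ i) (ρ i))
    (t : Fin k → ℝ) (ht0 : ∀ i, 0 ≤ t i) (ht1 : ∑ i, t i = 1)
    (v : EuclideanSpace ℝ (Fin N)) (hv : v = ∑ i, t i • ρ i)
    (ε : ℝ) (hε : 0 < ε) :
    ∃ (η : SymbSpace s) (q : ℕ), 0 < q ∧ shift^[q] η = η ∧
      ∃ ρη : EuclideanSpace ℝ (Fin N), HasRotVec φ η ρη ∧ ‖ρη - v‖ < ε :=
  convex_combination_approx_by_periodic_general s N hs φ R hbdd hloc k ξ p hp hper ρ hρ t ht0 ht1 v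
    hv ε hε
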